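/- With G as defined (hinge-loss value minus ν times ramp-loss risk), if δ_Y := m₁ − m₋₁ > 0 and δ_R := r₁ − r₋₁ > 0, then G(1) ≥ G(η) and G(−η) ≥ G(−1); moreover G(1) − G(−η) = (1+η)δ_Y − ν δ_R, so G(1) ≥ G(−η) if and only if δ_Y ≥ λ δ_R with λ = ν/(1+η). -/
import Mathlib


/-- Hinge loss. -/
noncomputable def phi (x : ℝ) : ℝ := max (1 - x) 0

/-- Shifted ramp loss. -/
noncomputable def psi (η x : ℝ) : ℝ :=
  if 0 ≤ x then 1 else if -η < x then (x + η) / η else 0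

theorem stmt_8 (m₁ mneg r₁ rneg ν η : ℝ)
    (hm₁ : 0 ≤ m₁) (hmneg : 0 ≤ mneg) (hr₁ : 0 < r₁) (hrneg : 0 < rneg)
    (hν : 0 < ν) (hη : 0 < η) (hη1 : η ≤ 1)
    (hδY : 0 < m₁ - mneg) (hδR : 0 < r₁ - rneg)
    (G : ℝ → ℝ)
    (hG : ∀ s, G s = -(phi s * m₁ + phi (-s) * mneg)
        - ν * (psi η s * r₁ + psi η (-s) * rneg)) :
    G η ≤ G 1 ∧ G (-1) ≤ G (-η) ∧
      G 1 - G (-η) = (1 + η) * (m₁ - mneg) - ν * (r₁ - rneg) ∧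
      (G (-η) ≤ G 1 ↔ (ν / (1 + η)) * (r₁ - rneg) ≤ m₁ - mneg) := by
  have h1 : G 1 = -(2 * mneg) - ν * r₁ := by
    rw [hG]; unfold phi psi
    rw [if_pos (by norm_num), if_neg (by norm_num), if_neg (by linarith)]
    have : max (1 - (1:ℝ)) 0 = 0 := by norm_num
    rw [this]
    have : max (1 - -(1:ℝ)) 0 = 2 := by norm_num
    rw [this]; ring
  have hη' : (0:ℝ) < 1 + η := by linarith
  have hη2 : max (1 - η) 0 = 1 - η := max_eq_left (by linarith)
  have hη3 : max (1 - -η) 0 = 1 + η := by rw [max_eq_left (by linarith : (0:ℝ) ≤ 1 - -η)]; ring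
  have hGη : G η = -((1 - η) * m₁ + (1 + η) * mneg) - ν * r₁ := by
    rw [hG]; unfold phi psi
    rw [if_pos (le_of_lt hη), if_neg (by linarith), if_neg (by linarith), hη2, hη3]; ring
  have hGnη : G (-η) = -((1 + η) * m₁ + (1 - η) * mneg) - ν * rneg := by
    rw [hG]; unfold phi psi
    rw [if_neg (by linarith), if_neg (by linarith), neg_neg, if_pos (le_of_lt hη), hη2, hη3]
    ring
  have hGn1 : G (-1) = -(2 * m₁) - ν * rneg := by
    rw [hG]; unfold phi psi
    rw [if_neg (by norm_num), if_neg (by linarith), neg_neg, if_pos (by norm_num)]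
    have : max (1 - -(1:ℝ)) 0 = 2 := by norm_num
    rw [this]
    have : max (1 - (1:ℝ)) 0 = 0 := by norm_num
    rw [this]; ring
  refine ⟨by rw [h1, hGη]; nlinarith, by rw [hGn1, hGnη]; nlinarith,
    by rw [h1, hGnη]; ring, ?_⟩
  rw [h1, hGnη]
  rw [div_mul_eq_mul_div, div_le_iff₀ hη']
  constructor <;> intro h <;> nlinarith
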